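/- The symbol of the double commutator [ℍ;[ℍ;v]]∂_x followed by ∂_x vanishes on positively-correlated frequencies: for k≠0, the k-th Fourier coefficient of ([ℍ;[ℍ;v]]f_x)_x equals (1/2π)Σ_ℓ Λ₁(k,ℓ) v̂(k−ℓ) f̂(ℓ) with Λ₁(k,ℓ) = 2(kℓ − |k||ℓ|); in particular Λ₁(k,ℓ) = 0 whenever kℓ ≥ 0, and |Λ₁(k,ℓ)| ≤ 2(k−ℓ)² for all k,ℓ ∈ ℤ. -/

import Mathlib

open MeasureTheory Complex
open scoped Real

noncomputable section

instance : Fact (0 < 2 * π) := ⟨by positivity⟩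

/-- The one-dimensional torus `ℝ/(2πℤ)`. -/
abbrev Torus := AddCircle (2 * π)

/-- The discrete Hilbert transform, defined on the Fourier side by
`(ℍ[f])^(k) = -i sgn(k) f̂(k)`. -/
noncomputable def hilbertT (f : Torus → ℂ) : Torus → ℂ := fun x =>
  ∑' k : ℤ, (-I * ((Int.sign k : ℤ) : ℂ)) * fourierCoeff f k * fourier k x

/-- The spatial derivative, defined on the Fourier side by `(f_x)^(k) = ik f̂(k)`. -/
noncomputable def derivT (f : Torus → ℂ) : Torus → ℂ := fun x =>
  ∑' k : ℤ, (I * (k : ℂ)) * fourierCoeff f k * fourier k x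

/-- The Sobolev norm `‖f‖_{H^s(𝕋)}`, with
`‖f‖² = (1/2π) Σ (1+|k|)^{2s} |f̂(k)|²` expressed through the
normalized Fourier coefficients of Mathlib. -/
noncomputable def hsNorm (s : ℝ) (f : Torus → ℂ) : ℝ :=
  Real.sqrt (2 * π * ∑' k : ℤ, (1 + |(k : ℝ)|) ^ (2 * s) * ‖fourierCoeff f k‖ ^ 2)

/-- Membership in the Sobolev space `H^s(𝕋)`. -/
def MemHs (s : ℝ) (f : Torus → ℂ) : Prop :=
  Summable fun k : ℤ => (1 + |(k : ℝ)|) ^ (2 * s) * ‖fourierCoeff f k‖ ^ 2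

/-- `f` is represented pointwise by its Fourier series (a quantitative way of
saying that `f` is sufficiently smooth / is the nice representative). -/
def FourierRep (f : Torus → ℂ) : Prop :=
  ∀ x : Torus, HasSum (fun k : ℤ => fourierCoeff f k * fourier k x) (f x)

/-- The commutator `[ℍ; v]g = ℍ[vg] - v ℍ[g]`. -/
noncomputable def commHilbert (v f : Torus → ℂ) : Torus → ℂ := fun x =>
  hilbertT (fun y => v y * f y) x - v x * hilbertT f x

/-- The iterated commutator `[ℍ; [ℍ; v]]g = ℍ([ℍ;v]g) - [ℍ;v](ℍ[g])`. -/
noncomputable def comm2Hilbert (v f : Torus → ℂ) : Torus → ℂ := fun x =>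
  hilbertT (commHilbert v f) x - commHilbert v (hilbertT f) x

/-- The symbol `Λ₁(k,ℓ) = 2(kℓ - |k||ℓ|)` of the double commutator. -/
def Lambda1 (k l : ℤ) : ℂ := ((2 * (k * l - |k| * |l|) : ℤ) : ℂ)

/-- A smooth periodic function: its Fourier coefficients decay faster than any
polynomial and the Fourier series represents the function. -/
def SmoothRep (f : Torus → ℂ) : Prop :=
  (∀ n : ℕ, Summable fun k : ℤ => (1 + |(k : ℝ)|) ^ n * ‖fourierCoeff f k‖) ∧
    FourierRep f

/-!
Everything is computed on the Fourier side. Functions given pointwise by Fourier series with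
rapidly decaying coefficients are closed under products (the coefficients convolve), under `ℍ`
and `∂ₓ` (the multipliers `σ(k) = -i sgn k` and `ik`), and their coefficients are their Fourier
coefficients. Commuting `ℍ` with a bilinear operator of symbol `s(k, l)` multiplies the symbol by
`σ(k) - σ(l)`, so `[ℍ; [ℍ; v]]` has symbol `(σ(k) - σ(l))²`, and the two derivatives contribute
`ik · il`. Finally `ik (σ(k) - σ(l))² il = kl (sgn k - sgn l)² = 2(kl - |k||l|)`.
-/

section Convolution

variable {G R : Type*} [AddGroup G] [NormedRing R] {b c : G → R}

theorem summable_norm_mul_norm_sub (hb : Summable (‖b ·‖)) (hc : Summable (‖c ·‖)) (k : G) :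
    Summable fun l => ‖b (k - l)‖ * ‖c l‖ :=
  (hc.mul_left (∑' n, ‖b n‖)).of_nonneg_of_le (fun _ => by positivity) fun l =>
    mul_le_mul_of_nonneg_right (hb.le_tsum _ fun _ _ => norm_nonneg _) (norm_nonneg _)

variable [CompleteSpace R]

theorem summable_mul_sub (hb : Summable (‖b ·‖)) (hc : Summable (‖c ·‖)) (k : G) :
    Summable fun l => b (k - l) * c l :=
  (summable_norm_mul_norm_sub hb hc k).of_norm_bounded fun _ => norm_mul_le _ _

theorem hasSum_conv (hb : Summable (‖b ·‖)) (hc : Summable (‖c ·‖)) :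
    HasSum (fun k => ∑' l, b (k - l) * c l) ((∑' n, b n) * ∑' n, c n) := by
  let shear : G × G ≃ G × G := (Equiv.prodComm G G).trans <|
    (Equiv.prodShear (Equiv.refl G) fun l => Equiv.subRight l).trans (Equiv.prodComm G G)
  have hprod := hb.of_norm.hasSum.mul hc.of_norm.hasSum (summable_mul_of_summable_norm hb hc)
  exact (shear.hasSum_iff.mpr hprod).prod_fiberwise fun k => (summable_mul_sub hb hc k).hasSum

end Convolution

def RapidDecay (c : ℤ → ℂ) : Prop :=
  ∀ n : ℕ, Summable fun k : ℤ => (1 + |(k : ℝ)|) ^ n * ‖c k‖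

theorem one_add_abs_pow_le_mul (k l : ℤ) (n : ℕ) :
    (1 + |(k : ℝ)|) ^ n ≤ (1 + |((k - l : ℤ) : ℝ)|) ^ n * (1 + |(l : ℝ)|) ^ n := by
  rw [← mul_pow]
  gcongr
  have := abs_add_le ((k : ℝ) - l) l
  rw [sub_add_cancel] at this
  push_cast
  nlinarith [abs_nonneg ((k : ℝ) - l), abs_nonneg (l : ℝ)]

namespace RapidDecay

variable {c d : ℤ → ℂ}

theorem summable_norm (h : RapidDecay c) : Summable fun k => ‖c k‖ := by
  simpa using h 0

theorem of_norm_le (hd : RapidDecay d) (C : ℝ) (m : ℕ)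
    (hle : ∀ k : ℤ, ‖c k‖ ≤ C * (1 + |(k : ℝ)|) ^ m * ‖d k‖) : RapidDecay c := fun n =>
  ((hd (n + m)).mul_left C).of_nonneg_of_le (fun _ => by positivity) fun k => by
    calc (1 + |(k : ℝ)|) ^ n * ‖c k‖
        ≤ (1 + |(k : ℝ)|) ^ n * (C * (1 + |(k : ℝ)|) ^ m * ‖d k‖) := by gcongr; exact hle k
      _ = C * ((1 + |(k : ℝ)|) ^ (n + m) * ‖d k‖) := by ring

theorem sub (hc : RapidDecay c) (hd : RapidDecay d) : RapidDecay fun k => c k - d k := fun n =>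
  ((hc n).add (hd n)).of_nonneg_of_le (fun _ => by positivity) fun k => by
    rw [← mul_add]; gcongr; exact norm_sub_le _ _

theorem conv (hc : RapidDecay c) (hd : RapidDecay d) :
    RapidDecay fun k => ∑' l, c (k - l) * d l := fun n => by
  set w : ℤ → ℝ := fun k => (1 + |(k : ℝ)|) ^ n
  have hwc : Summable fun k => ‖w k * ‖c k‖‖ := (hc n).abs
  have hwd : Summable fun k => ‖w k * ‖d k‖‖ := (hd n).abs
  refine (hasSum_conv hwc hwd).summable.of_nonneg_of_le (fun _ => by positivity) fun k => ?_
  have hfib := summable_norm_mul_norm_sub hc.summable_norm hd.summable_norm k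
  calc w k * ‖∑' l, c (k - l) * d l‖ ≤ w k * ∑' l, ‖c (k - l)‖ * ‖d l‖ := by
        gcongr
        exact tsum_of_norm_bounded hfib.hasSum fun _ => norm_mul_le _ _
      _ ≤ ∑' l, w (k - l) * ‖c (k - l)‖ * (w l * ‖d l‖) := by
        rw [← tsum_mul_left]
        refine (hfib.mul_left (w k)).tsum_le_tsum (fun l => ?_) (summable_mul_sub hwc hwd k)
        calc w k * (‖c (k - l)‖ * ‖d l‖) ≤ w (k - l) * w l * (‖c (k - l)‖ * ‖d l‖) := by
              gcongr; exact one_add_abs_pow_le_mul k l n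
          _ = _ := by ring

end RapidDecay

section FourierSeries

variable {T : ℝ}

theorem summable_mul_fourier {c : ℤ → ℂ} (hc : Summable (‖c ·‖)) (x : AddCircle T) :
    Summable fun n => c n * fourier n x :=
  hc.of_norm_bounded fun n => by simp [Circle.norm_coe]

theorem fourierCoeff_eq_of_hasSum [Fact (0 < T)] {g : AddCircle T → ℂ} {c : ℤ → ℂ}
    (hc : Summable (‖c ·‖)) (hg : ∀ x, HasSum (fun n => c n * fourier n x) (g x)) (k : ℤ) :
    fourierCoeff g k = c k := by
  have hint := hasSum_integral_of_summable_integral_norm (μ := AddCircle.haarAddCircle)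
    (F := fun n x => fourier (-k) x • (c n * fourier n x))
    (fun n => (by fun_prop : Continuous fun x : AddCircle T => fourier (-k) x • (c n * fourier n x))
      |>.integrable_of_hasCompactSupport (.of_compactSpace _)) (by simpa [Circle.norm_coe] using hc)
  have hterm (n : ℤ) :
      ∫ x : AddCircle T, fourier (-k) x • (c n * fourier n x) ∂AddCircle.haarAddCircle =
        c n * (Pi.single n 1 : ℤ → ℂ) k := by
    rw [← fourierCoeff_fourier (T := T), ← fourierCoeff.const_mul]; rfl
  simp_rw [hterm, smul_eq_mul, tsum_mul_left, (hg _).tsum_eq] at hint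
  have hsingle : HasSum (fun n => c n * (Pi.single n 1 : ℤ → ℂ) k) (c k) := by
    simpa using hasSum_single (f := fun n => c n * (Pi.single n 1 : ℤ → ℂ) k) k fun n hn => by
      simp [Ne.symm hn]
  exact hint.unique hsingle

end FourierSeries

def hilbertSymbol (k : ℤ) : ℂ := -I * ((Int.sign k : ℤ) : ℂ)

theorem norm_hilbertSymbol_le (k : ℤ) : ‖hilbertSymbol k‖ ≤ 1 := by
  rcases Int.sign_trichotomy k with h | h | h <;> simp [hilbertSymbol, h]

structure HasRapidFourierSeries (g : Torus → ℂ) (c : ℤ → ℂ) : Prop where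
  rapidDecay : RapidDecay c
  hasSum : ∀ x, HasSum (fun n => c n * fourier n x) (g x)

theorem SmoothRep.hasRapidFourierSeries {f : Torus → ℂ} (hf : SmoothRep f) :
    HasRapidFourierSeries f (fourierCoeff f) :=
  ⟨hf.1, hf.2⟩

namespace HasRapidFourierSeries

variable {v g h : Torus → ℂ} {b c d : ℤ → ℂ}

theorem fourierCoeff_eq (hg : HasRapidFourierSeries g c) : fourierCoeff g = c :=
  funext <| fourierCoeff_eq_of_hasSum hg.rapidDecay.summable_norm hg.hasSum

theorem fourierMultiplier (hg : HasRapidFourierSeries g c) {m : ℤ → ℂ}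
    (hm : RapidDecay fun k => m k * c k) :
    HasRapidFourierSeries (fun x => ∑' k, m k * fourierCoeff g k * fourier k x)
      fun k => m k * c k where
  rapidDecay := hm
  hasSum x := by
    rw [hg.fourierCoeff_eq]
    exact (summable_mul_fourier hm.summable_norm x).hasSum

theorem derivT (hg : HasRapidFourierSeries g c) :
    HasRapidFourierSeries (derivT g) fun k => I * k * c k :=
  hg.fourierMultiplier <| hg.rapidDecay.of_norm_le 1 1 fun k => by
    simp only [norm_mul, norm_I, Complex.norm_intCast, one_mul, pow_one]
    gcongr
    linarith

theorem hilbertT (hg : HasRapidFourierSeries g c) :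
    HasRapidFourierSeries (hilbertT g) fun k => hilbertSymbol k * c k :=
  hg.fourierMultiplier <| hg.rapidDecay.of_norm_le 1 0 fun k => by
    rw [norm_mul, one_mul, pow_zero, one_mul]
    exact mul_le_of_le_one_left (norm_nonneg _) (norm_hilbertSymbol_le k)

theorem sub (hg : HasRapidFourierSeries g c) (hh : HasRapidFourierSeries h d) :
    HasRapidFourierSeries (fun x => g x - h x) fun k => c k - d k where
  rapidDecay := hg.rapidDecay.sub hh.rapidDecay
  hasSum x := by simpa only [sub_mul] using (hg.hasSum x).sub (hh.hasSum x)

theorem mul (hv : HasRapidFourierSeries v b) (hg : HasRapidFourierSeries g c) :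
    HasRapidFourierSeries (fun x => v x * g x) fun k => ∑' l, b (k - l) * c l where
  rapidDecay := hv.rapidDecay.conv hg.rapidDecay
  hasSum x := by
    have hprod := hasSum_conv (b := fun n => b n * fourier n x) (c := fun n => c n * fourier n x)
      (by simpa [Circle.norm_coe] using hv.rapidDecay.summable_norm)
      (by simpa [Circle.norm_coe] using hg.rapidDecay.summable_norm)
    rw [(hv.hasSum x).tsum_eq, (hg.hasSum x).tsum_eq] at hprod
    have hterm (k : ℤ) : (∑' l, b (k - l) * c l) * fourier k x =
        ∑' l, b (k - l) * fourier (k - l) x * (c l * fourier l x) := by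
      rw [← tsum_mul_right]
      congr 1 with l
      rw [← sub_add_cancel k l, fourier_add, add_sub_cancel_right]
      ring
    rw [funext hterm]
    exact hprod

theorem hilbertT_commutator {A : (Torus → ℂ) → Torus → ℂ} {s : ℤ → ℤ → ℂ} {C : ℝ}
    (hs : ∀ k l, ‖s k l‖ ≤ C) (hb : Summable (‖b ·‖))
    (hA : ∀ {g c}, HasRapidFourierSeries g c →
      HasRapidFourierSeries (A g) fun k => ∑' l, s k l * (b (k - l) * c l))
    (hg : HasRapidFourierSeries g c) :
    HasRapidFourierSeries (fun x => _root_.hilbertT (A g) x - A (_root_.hilbertT g) x)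
      fun k => ∑' l, (hilbertSymbol k - hilbertSymbol l) * s k l * (b (k - l) * c l) := by
  have hfiber {c' : ℤ → ℂ} (hc' : Summable (‖c' ·‖)) (k : ℤ) :
      Summable fun l => s k l * (b (k - l) * c' l) :=
    ((summable_norm_mul_norm_sub hb hc' k).mul_left C).of_norm_bounded fun l => by
      rw [norm_mul]
      exact mul_le_mul (hs k l) (norm_mul_le _ _) (norm_nonneg _) ((norm_nonneg _).trans (hs k l))
  have hsymbol : (fun k => hilbertSymbol k * ∑' l, s k l * (b (k - l) * c l) -
      ∑' l, s k l * (b (k - l) * (hilbertSymbol l * c l))) =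
      fun k => ∑' l, (hilbertSymbol k - hilbertSymbol l) * s k l * (b (k - l) * c l) := by
    funext k
    rw [← tsum_mul_left, ← ((hfiber hg.rapidDecay.summable_norm k).mul_left _).tsum_sub
      (hfiber hg.hilbertT.rapidDecay.summable_norm k)]
    congr 1 with l
    ring
  exact hsymbol ▸ (hA hg).hilbertT.sub (hA hg.hilbertT)

theorem commHilbert (hv : HasRapidFourierSeries v b) (hg : HasRapidFourierSeries g c) :
    HasRapidFourierSeries (commHilbert v g)
      fun k => ∑' l, (hilbertSymbol k - hilbertSymbol l) * (b (k - l) * c l) := by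
  have h := hilbertT_commutator (A := fun u x => v x * u x) (s := fun _ _ => 1)
    (fun _ _ => norm_one.le) hv.rapidDecay.summable_norm
    (fun hu => by simpa only [one_mul] using hv.mul hu) hg
  simp only [mul_one] at h
  exact h

theorem comm2Hilbert (hv : HasRapidFourierSeries v b) (hg : HasRapidFourierSeries g c) :
    HasRapidFourierSeries (comm2Hilbert v g)
      fun k => ∑' l, (hilbertSymbol k - hilbertSymbol l) ^ 2 * (b (k - l) * c l) := by
  have h := hilbertT_commutator (A := _root_.commHilbert v) (C := 2)
    (fun k l => (norm_sub_le _ _).trans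
      (by linarith [norm_hilbertSymbol_le k, norm_hilbertSymbol_le l]))
    hv.rapidDecay.summable_norm hv.commHilbert hg
  simp only [← sq] at h
  exact h

end HasRapidFourierSeries

theorem mul_mul_sign_sub_sign_sq (k l : ℤ) :
    k * l * (k.sign - l.sign) ^ 2 = 2 * (k * l - |k| * |l|) := by
  have hk : k * k.sign = |k| := by rw [Int.mul_sign_self, Int.natCast_natAbs]
  have hl : l * l.sign = |l| := by rw [Int.mul_sign_self, Int.natCast_natAbs]
  have hk' : |k| * k.sign = k := by rw [mul_comm, Int.sign_mul_abs]
  have hl' : |l| * l.sign = l := by rw [mul_comm, Int.sign_mul_abs]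
  linear_combination (l * k.sign - 2 * l * l.sign) * hk + l * hk' + k * l.sign * hl + k * hl' -
    2 * |k| * hl

theorem lambda1_eq_symbol (k l : ℤ) :
    Lambda1 k l = I * k * (hilbertSymbol k - hilbertSymbol l) ^ 2 * (I * l) := by
  rw [Lambda1, ← mul_mul_sign_sub_sign_sq, hilbertSymbol, hilbertSymbol]
  push_cast
  linear_combination
    (-(k : ℂ) * l * ((k.sign : ℂ) - l.sign) ^ 2 * (I ^ 2 - 1)) * I_sq

theorem lambda1_eq_zero_of_mul_nonneg (k l : ℤ) (h : 0 ≤ k * l) : Lambda1 k l = 0 := by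
  rw [Lambda1, ← abs_mul, abs_of_nonneg h, sub_self, mul_zero, Int.cast_zero]

theorem norm_lambda1_le (k l : ℤ) : ‖Lambda1 k l‖ ≤ 2 * ((k : ℝ) - l) ^ 2 := by
  rw [Lambda1, Complex.norm_intCast]
  push_cast
  have hkl : (k : ℝ) * l ≤ |(k : ℝ)| * |(l : ℝ)| := by rw [← abs_mul]; exact le_abs_self _
  rw [abs_of_nonpos (by linarith)]
  nlinarith [sq_nonneg (|(k : ℝ)| - |(l : ℝ)|), sq_abs (k : ℝ), sq_abs (l : ℝ)]

/-- For smooth periodic `v`, `f` and all `k ≠ 0`, the `k`-th Fourier coefficient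
of `([ℍ;[ℍ;v]]f_x)_x` equals the convolution `Σ_ℓ Λ₁(k,ℓ) v̂(k-ℓ) f̂(ℓ)` with
`Λ₁(k,ℓ) = 2(kℓ - |k||ℓ|)`; moreover `Λ₁(k,ℓ) = 0` whenever `kℓ ≥ 0`, and
`|Λ₁(k,ℓ)| ≤ 2(k-ℓ)²` for all `k, ℓ ∈ ℤ`.  (Here the normalized Fourier
coefficients of Mathlib are used, so the convolution carries no `1/2π`.) -/
theorem double_commutator_symbol (v f : Torus → ℂ)
    (hv : SmoothRep v) (hf : SmoothRep f) :
    (∀ k : ℤ, k ≠ 0 →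
      fourierCoeff (derivT (comm2Hilbert v (derivT f))) k
        = ∑' l : ℤ, Lambda1 k l * fourierCoeff v (k - l) * fourierCoeff f l) ∧
    (∀ k l : ℤ, 0 ≤ k * l → Lambda1 k l = 0) ∧
    (∀ k l : ℤ, ‖Lambda1 k l‖ ≤ 2 * ((k : ℝ) - l) ^ 2) := by
  refine ⟨fun k _ => ?_, lambda1_eq_zero_of_mul_nonneg, norm_lambda1_le⟩
  have hseries :=
    (hv.hasRapidFourierSeries.comm2Hilbert hf.hasRapidFourierSeries.derivT).derivT
  simp only [hseries.fourierCoeff_eq, ← tsum_mul_left]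
  congr 1 with l
  rw [lambda1_eq_symbol]
  ring
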